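/- arXiv:2402.06195 — 3 statements merged into one kernel-verified Lean document; each statement's English description precedes it below -/
import Mathlib

section
/- Let G be a connected finite simple graph with nonempty vertex set V, and let s : V → ℝ satisfy Σ_{i∈V} s(i) ≤ 0. Then there exists z : V → ℝ such that s(i) + Σ_{j∈N(i)} (z(i) − z(j)) ≤ 0 for every i ∈ V. -/
/-!
The local constraint at `i` reads `s i + (L z) i ≤ 0`, where `L` is the Laplacian of `G`.
The column sums of `L` vanish, so its range lies in the hyperplane `∑ i, t i = 0`; for a connected
graph its kernel is the line of constant vectors, so by rank–nullity the range is that whole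
hyperplane. Taking `t` with `s i + t i` equal to the mean of `s`, which is `≤ 0`, gives `z` with
`L z = t`.
-/

open Finset Matrix

namespace SimpleGraph

variable {V : Type*} [Fintype V] [DecidableEq V] (G : SimpleGraph V) [DecidableRel G.Adj]

theorem lapMatrix_mulVec_apply_eq_sum_sub {R : Type*} [NonAssocRing R] (z : V → R) (i : V) :
    (G.lapMatrix R *ᵥ z) i = ∑ j ∈ G.neighborFinset i, (z i - z j) := by
  rw [lapMatrix_mulVec_apply, sum_sub_distrib, sum_const, card_neighborFinset_eq_degree,
    nsmul_eq_mul]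

theorem sum_lapMatrix_mulVec {R : Type*} [CommRing R] (z : V → R) :
    ∑ i, (G.lapMatrix R *ᵥ z) i = 0 := by
  calc ∑ i, (G.lapMatrix R *ᵥ z) i = (fun _ ↦ 1) ⬝ᵥ (G.lapMatrix R *ᵥ z) := by
        simp only [dotProduct, one_mul]
    _ = (G.lapMatrix R *ᵥ fun _ ↦ 1) ⬝ᵥ z := by
        rw [dotProduct_mulVec, ← mulVec_transpose, (G.isSymm_lapMatrix (R := R)).eq]
    _ = 0 := by rw [lapMatrix_mulVec_const_eq_zero, zero_dotProduct]

variable {G}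

theorem Connected.finrank_ker_toLin'_lapMatrix (hG : G.Connected) :
    Module.finrank ℝ (LinearMap.ker (G.lapMatrix ℝ).toLin') = 1 := by
  have := hG.nonempty
  have := hG.preconnected.subsingleton_connectedComponent
  rw [← card_connectedComponent_eq_finrank_ker_toLin'_lapMatrix, Fintype.card_eq_one_iff]
  exact ⟨Classical.arbitrary _, fun _ ↦ Subsingleton.elim _ _⟩

theorem Connected.exists_lapMatrix_mulVec_eq (hG : G.Connected) {t : V → ℝ}
    (ht : ∑ i, t i = 0) : ∃ z, G.lapMatrix ℝ *ᵥ z = t := by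
  let sum : Module.Dual ℝ (V → ℝ) :=
    LinearMap.lsum ℝ (fun _ ↦ ℝ) ℝ fun _ ↦ LinearMap.id
  have sum_apply (x : V → ℝ) : sum x = ∑ i, x i := by simp [sum]
  have range_le : LinearMap.range (G.lapMatrix ℝ).toLin' ≤ LinearMap.ker sum := by
    rintro _ ⟨z, rfl⟩
    rw [LinearMap.mem_ker, sum_apply, toLin'_apply, sum_lapMatrix_mulVec]
  have sum_ne_zero : sum ≠ 0 := by
    obtain ⟨v⟩ := hG.nonempty
    intro h
    simpa [sum_apply] using LinearMap.congr_fun h (Pi.single v 1)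
  have finrank_ker := sum.finrank_ker_add_one_of_ne_zero sum_ne_zero
  have rank_nullity := LinearMap.finrank_range_add_finrank_ker (G.lapMatrix ℝ).toLin'
  rw [hG.finrank_ker_toLin'_lapMatrix] at rank_nullity
  have range_eq := Submodule.eq_of_le_of_finrank_le range_le (by omega)
  obtain ⟨z, hz⟩ : t ∈ LinearMap.range (G.lapMatrix ℝ).toLin' := by
    rw [range_eq, LinearMap.mem_ker, sum_apply, ht]
  exact ⟨z, by rwa [toLin'_apply] at hz⟩

end SimpleGraph

theorem exists_mismatch_vars_of_coupled_constraint_general {V : Type*} [Fintype V]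
    (G : SimpleGraph V) [DecidableRel G.Adj] (hG : G.Connected)
    (s : V → ℝ) (hs : ∑ i : V, s i ≤ 0) :
    ∃ z : V → ℝ, ∀ i : V, s i + ∑ j ∈ G.neighborFinset i, (z i - z j) ≤ 0 := by
  classical
  have := hG.nonempty
  set mean := (∑ i, s i) / Fintype.card V
  have ht : ∑ i, (mean - s i) = 0 := by
    rw [sum_sub_distrib, sum_const, card_univ, nsmul_eq_mul, mul_div_cancel₀ _
      (Nat.cast_ne_zero.mpr Fintype.card_ne_zero), sub_self]
  obtain ⟨z, hz⟩ := hG.exists_lapMatrix_mulVec_eq ht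
  refine ⟨z, fun i ↦ ?_⟩
  rw [← G.lapMatrix_mulVec_apply_eq_sum_sub, hz, add_sub_cancel]
  exact div_nonpos_of_nonpos_of_nonneg hs (Nat.cast_nonneg _)

/-- Existence direction of Proposition 1: if `Σ_{i∈V} s i ≤ 0` on a connected
finite simple graph, then there exist constraint-mismatch variables `z`
making every local decoupled constraint `s i + Σ_{j∈N(i)} (z i − z j) ≤ 0`
feasible. -/
theorem exists_mismatch_vars_of_coupled_constraint {V : Type*} [Fintype V]
    [Nonempty V] (G : SimpleGraph V) [DecidableRel G.Adj] (hG : G.Connected)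
    (s : V → ℝ) (hs : ∑ i : V, s i ≤ 0) :
    ∃ z : V → ℝ, ∀ i : V, s i + ∑ j ∈ G.neighborFinset i, (z i - z j) ≤ 0 :=
  exists_mismatch_vars_of_coupled_constraint_general G hG s hs
end

section
/- Let μ > 0 and ε > 0, let f : ℝ^m → ℝ be μ-strongly convex, and let C ⊆ ℝ^m × ℝ^q be a convex set. Suppose (u*, z*) ∈ C satisfies f(u*) ≤ f(u) for every (u, z) ∈ C, and suppose (u_ε, z_ε) ∈ C minimizes the function (u, z) ↦ f(u) + ε‖z‖² over C. Then (μ/2)‖u_ε − u*‖² ≤ ε‖z*‖²; in particular ‖u_ε − u*‖ ≤ √(2ε/μ) · ‖z*‖. -/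
open Filter Set Topology

section StrongConvexity

variable {E : Type*} [NormedAddCommGroup E] [NormedSpace ℝ E] {s : Set E} {m : ℝ} {f : E → ℝ}

/-- Comparing `f x` with `f` at `(1 - t) • x + t • y` and dividing by `t` gives the bound with
the factor `1 - t` in front of `m / 2 * ‖y - x‖ ^ 2`; let `t → 0⁺`. -/
theorem StrongConvexOn.add_mul_sq_norm_sub_le_of_isMinOn_segment (hf : StrongConvexOn s m f)
    {x y : E} (hx : x ∈ s) (hy : y ∈ s) (hmin : IsMinOn f (segment ℝ x y) x) :
    f x + m / 2 * ‖y - x‖ ^ 2 ≤ f y := by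
  set c := m / 2 * ‖y - x‖ ^ 2 with hc
  have hslope : ∀ t ∈ Ioo (0 : ℝ) 1, f x + (1 - t) * c ≤ f y := by
    rintro t ⟨ht0, ht1⟩
    have hmem : (1 - t) • x + t • y ∈ segment ℝ x y :=
      ⟨1 - t, t, by linarith, ht0.le, by ring, rfl⟩
    have hle := (hmin hmem).trans (hf.2 hx hy (by linarith) ht0.le (by ring))
    simp only [smul_eq_mul, norm_sub_rev x y, ← hc] at hle
    have hscaled : t * (f x + (1 - t) * c) ≤ t * f y := by linarith
    exact le_of_mul_le_mul_left hscaled ht0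
  have hlim : Tendsto (fun t : ℝ ↦ f x + (1 - t) * c) (𝓝[>] 0) (𝓝 (f x + c)) := by
    have : Continuous fun t : ℝ ↦ f x + (1 - t) * c := by fun_prop
    simpa using this.continuousWithinAt.tendsto (x := 0) (s := Ioi 0)
  exact le_of_tendsto hlim (eventually_of_mem (Ioo_mem_nhdsGT one_pos) hslope)

variable {F : Type*} [AddCommGroup F] [Module ℝ F]

/-- Convexity of `C` makes `u` a minimizer of `f` on the segment `[u, u']`, so strong convexity
gives `f u + m / 2 * ‖u' - u‖ ^ 2 ≤ f u'`; minimality of `(u', z')` bounds `f u' - f u` by `g z`. -/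
theorem StrongConvexOn.mul_sq_norm_sub_le_of_isMinOn_add_penalty (hf : StrongConvexOn univ m f)
    {C : Set (E × F)} (hC : Convex ℝ C) {g : F → ℝ} (hg : ∀ z, 0 ≤ g z) {u u' : E} {z z' : F}
    (hmem : (u, z) ∈ C) (hmin : IsMinOn (fun p ↦ f p.1) C (u, z))
    (hmem' : (u', z') ∈ C) (hmin' : IsMinOn (fun p ↦ f p.1 + g p.2) C (u', z')) :
    m / 2 * ‖u' - u‖ ^ 2 ≤ g z := by
  have hsegment : IsMinOn f (segment ℝ u u') u := by
    rintro _ ⟨a, b, ha, hb, hab, rfl⟩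
    exact hmin (hC hmem hmem' ha hb hab)
  have hgrowth := hf.add_mul_sq_norm_sub_le_of_isMinOn_segment (mem_univ u) (mem_univ u') hsegment
  have hpenalized : f u' + g z' ≤ f u + g z := hmin' hmem
  linarith [hg z']

end StrongConvexity

theorem Real.le_sqrt_mul_of_mul_sq_le {μ ε a b : ℝ} (hμ : 0 < μ) (hb : 0 ≤ b)
    (h : μ / 2 * a ^ 2 ≤ ε * b ^ 2) : a ≤ √(2 * ε / μ) * b := by
  have hsq : a ^ 2 ≤ 2 * ε / μ * b ^ 2 := by
    rw [div_mul_eq_mul_div, le_div_iff₀ hμ]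
    linarith
  calc a ≤ |a| := le_abs_self a
    _ ≤ √(2 * ε / μ * b ^ 2) := Real.abs_le_sqrt hsq
    _ = √(2 * ε / μ) * b := by rw [Real.sqrt_mul' _ (sq_nonneg b), Real.sqrt_sq hb]

/-- Sensitivity of the regularized decoupled problem: if `(u*, z*) ∈ C`
minimizes `f` in the `u`-component over the convex set `C` and `(u_ε, z_ε)`
minimizes the regularized objective `(u,z) ↦ f u + ε‖z‖²` over `C`, with `f`
`μ`-strongly convex, then `(μ/2)‖u_ε − u*‖² ≤ ε‖z*‖²`, and in particular
`‖u_ε − u*‖ ≤ √(2ε/μ)·‖z*‖`. -/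
theorem regularized_optimizer_close_to_optimizer {m q : ℕ} (μ ε : ℝ)
    (hμ : 0 < μ) (hε : 0 < ε) (f : EuclideanSpace ℝ (Fin m) → ℝ)
    (hf : ConvexOn ℝ Set.univ (fun u => f u - μ / 2 * ‖u‖ ^ 2))
    (C : Set (EuclideanSpace ℝ (Fin m) × EuclideanSpace ℝ (Fin q)))
    (hC : Convex ℝ C)
    (ustar : EuclideanSpace ℝ (Fin m)) (zstar : EuclideanSpace ℝ (Fin q))
    (hstar : (ustar, zstar) ∈ C)
    (hstarmin : ∀ uz ∈ C, f ustar ≤ f uz.1)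
    (uε : EuclideanSpace ℝ (Fin m)) (zε : EuclideanSpace ℝ (Fin q))
    (hε' : (uε, zε) ∈ C)
    (hεmin : ∀ uz ∈ C, f uε + ε * ‖zε‖ ^ 2 ≤ f uz.1 + ε * ‖uz.2‖ ^ 2) :
    μ / 2 * ‖uε - ustar‖ ^ 2 ≤ ε * ‖zstar‖ ^ 2 ∧
      ‖uε - ustar‖ ≤ Real.sqrt (2 * ε / μ) * ‖zstar‖ := by
  have hbound : μ / 2 * ‖uε - ustar‖ ^ 2 ≤ ε * ‖zstar‖ ^ 2 :=
    (strongConvexOn_iff_convex.mpr hf).mul_sq_norm_sub_le_of_isMinOn_add_penalty hC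
      (g := fun z ↦ ε * ‖z‖ ^ 2) (fun z ↦ by positivity) hstar hstarmin hε' hεmin
  exact ⟨hbound, Real.le_sqrt_mul_of_mul_sq_le hμ (norm_nonneg zstar) hbound⟩
end

section
/- Let μ > 0, Z > 0 and δ > 0, let K be any index set, and for each ξ ∈ K let C(ξ) ⊆ ℝ^m × ℝ^q be a convex set and f(ξ, ·) : ℝ^m → ℝ be μ-strongly convex. Suppose for each ξ ∈ K there are (u*(ξ), z*(ξ)) ∈ C(ξ) with f(ξ, u*(ξ)) ≤ f(ξ, u) for all (u, z) ∈ C(ξ) and with ‖z*(ξ)‖ ≤ Z, and suppose for each ε > 0 and ξ ∈ K the pair (u_ε(ξ), z_ε(ξ)) ∈ C(ξ) minimizes (u, z) ↦ f(ξ, u) + ε‖z‖² over C(ξ). Then for every ε with 0 < ε < μδ²/(2Z²), one has ‖u_ε(ξ) − u*(ξ)‖ ≤ δ for all ξ ∈ K. -/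
/-!
Let `d = u_ε(ξ) - u*(ξ)`. Since `u*(ξ)` minimizes the `μ`-strongly convex `f ξ` over the convex
projection of `C ξ` to the `u`-variables, `f ξ` grows at least quadratically away from it:
`μ/2 ‖d‖² ≤ f ξ (u_ε ξ) - f ξ (u* ξ)`. Testing the regularized problem against `(u*, z*)` bounds
the same gap by `ε ‖z*‖² ≤ ε Z²`, and `ε Z² < μ δ² / 2` forces `‖d‖ < δ`.
-/

open Filter Topology

/-- Comparing `f` at the minimizer `x` with `f` along the segment from `x` to `y`, and letting the
segment shrink to `x`, turns the modulus of uniform convexity into a growth bound. -/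
theorem UniformConvexOn.le_sub_of_isMinOn {E : Type*} [NormedAddCommGroup E] [NormedSpace ℝ E]
    {s : Set E} {φ : ℝ → ℝ} {f : E → ℝ} {x y : E} (hf : UniformConvexOn s φ f)
    (hmin : IsMinOn f s x) (hx : x ∈ s) (hy : y ∈ s) :
    φ ‖y - x‖ ≤ f y - f x := by
  have segment_bound : ∀ t ∈ Set.Ioo (0 : ℝ) 1, (1 - t) * φ ‖y - x‖ ≤ f y - f x := by
    rintro t ⟨ht₀, ht₁⟩
    have hconv := hf.2 hy hx ht₀.le (sub_nonneg.2 ht₁.le) (add_sub_cancel t 1)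
    have hle : f x ≤ f (t • y + (1 - t) • x) :=
      hmin (hf.1 hy hx ht₀.le (sub_nonneg.2 ht₁.le) (add_sub_cancel t 1))
    simp only [smul_eq_mul] at hconv
    have : t * ((1 - t) * φ ‖y - x‖) ≤ t * (f y - f x) := by nlinarith
    exact le_of_mul_le_mul_left this ht₀
  have hlim : Tendsto (fun t : ℝ => (1 - t) * φ ‖y - x‖) (𝓝[>] 0) (𝓝 (φ ‖y - x‖)) := by
    have : Tendsto (fun t : ℝ => (1 - t) * φ ‖y - x‖) (𝓝 0) (𝓝 ((1 - 0) * φ ‖y - x‖)) :=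
      ((continuous_const.sub continuous_id).mul continuous_const).tendsto 0
    simpa using this.mono_left nhdsWithin_le_nhds
  exact le_of_tendsto hlim (eventually_of_mem (Ioo_mem_nhdsGT one_pos) segment_bound)

/-- Uniform sensitivity of the regularized problem: over a family of states
`ξ ∈ K` with `μ`-strongly convex objectives `f ξ`, convex feasible sets `C ξ`,
minimizers `(u* ξ, z* ξ)` with `‖z* ξ‖ ≤ Z`, and regularized minimizers
`(u_ε ξ, z_ε ξ)`, every `ε` with `0 < ε < μδ²/(2Z²)` gives
`‖u_ε ξ − u* ξ‖ ≤ δ` uniformly on `K`. -/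
theorem uniform_sensitivity_regularized {m q : ℕ} {K : Type*}
    (μ Z δ : ℝ) (hμ : 0 < μ) (hZ : 0 < Z) (hδ : 0 < δ)
    (C : K → Set (EuclideanSpace ℝ (Fin m) × EuclideanSpace ℝ (Fin q)))
    (hC : ∀ ξ, Convex ℝ (C ξ))
    (f : K → EuclideanSpace ℝ (Fin m) → ℝ)
    (hf : ∀ ξ, ConvexOn ℝ Set.univ (fun u => f ξ u - μ / 2 * ‖u‖ ^ 2))
    (ustar : K → EuclideanSpace ℝ (Fin m))
    (zstar : K → EuclideanSpace ℝ (Fin q))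
    (hstar : ∀ ξ, (ustar ξ, zstar ξ) ∈ C ξ)
    (hstarmin : ∀ ξ, ∀ uz ∈ C ξ, f ξ (ustar ξ) ≤ f ξ uz.1)
    (hzbound : ∀ ξ, ‖zstar ξ‖ ≤ Z)
    (uε : ℝ → K → EuclideanSpace ℝ (Fin m))
    (zε : ℝ → K → EuclideanSpace ℝ (Fin q))
    (hεfeas : ∀ ε > 0, ∀ ξ, (uε ε ξ, zε ε ξ) ∈ C ξ)
    (hεmin : ∀ ε > 0, ∀ ξ, ∀ uz ∈ C ξ,
      f ξ (uε ε ξ) + ε * ‖zε ε ξ‖ ^ 2 ≤ f ξ uz.1 + ε * ‖uz.2‖ ^ 2) :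
    ∀ ε, 0 < ε → ε < μ * δ ^ 2 / (2 * Z ^ 2) →
      ∀ ξ, ‖uε ε ξ - ustar ξ‖ ≤ δ := by
  intro ε hε hεδ ξ
  set s := Prod.fst '' C ξ
  have hs : Convex ℝ s := (hC ξ).linear_image (LinearMap.fst ℝ _ _)
  have hstrong : StrongConvexOn s μ (f ξ) :=
    strongConvexOn_iff_convex.2 ((hf ξ).subset (Set.subset_univ s) hs)
  have hmin : IsMinOn (f ξ) s (ustar ξ) := by
    rintro _ ⟨uz, huz, rfl⟩
    exact hstarmin ξ uz huz
  have growth : μ / 2 * ‖uε ε ξ - ustar ξ‖ ^ 2 ≤ f ξ (uε ε ξ) - f ξ (ustar ξ) :=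
    UniformConvexOn.le_sub_of_isMinOn hstrong hmin ⟨_, hstar ξ, rfl⟩ ⟨_, hεfeas ε hε ξ, rfl⟩
  have gap : f ξ (uε ε ξ) - f ξ (ustar ξ) ≤ ε * Z ^ 2 := by
    have hreg := hεmin ε hε ξ _ (hstar ξ)
    have hz : ‖zstar ξ‖ ^ 2 ≤ Z ^ 2 := pow_le_pow_left₀ (norm_nonneg _) (hzbound ξ) 2
    nlinarith [norm_nonneg (zε ε ξ)]
  have hεZ : ε * (2 * Z ^ 2) < μ * δ ^ 2 := (lt_div_iff₀ (by positivity)).1 hεδ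
  have hsq : ‖uε ε ξ - ustar ξ‖ ^ 2 < δ ^ 2 := by nlinarith
  exact (lt_of_pow_lt_pow_left₀ 2 hδ.le hsq).le
end
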